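/- arXiv:1109.5208 — 5 statements merged into one kernel-verified Lean document; each statement's English description precedes it below -/
import Mathlib

section
/- A finite digraph U has an acyclic-sink set of cardinality j if and only if every induced subdigraph of U with more than |V(U)| − j vertices contains a vertex of outdegree 0 (in the induced subdigraph). -/
/-- Induced (restricted) arc relation on a vertex set `S`. -/
def Restrict {V : Type*} (A : V → V → Prop) (S : Set V) : V → V → Prop :=
  fun u v => u ∈ S ∧ v ∈ S ∧ A u v

/-- A digraph (arc relation) is acyclic if it has no directed cycle,
i.e. no vertex reaches itself by a nonempty directed walk. -/
def IsAcyclic {V : Type*} (A : V → V → Prop) : Prop :=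
  ∀ v, ¬ Relation.TransGen A v v

/-- The subdigraph induced by `S` is acyclic. -/
def AcyclicOn {V : Type*} (A : V → V → Prop) (S : Set V) : Prop :=
  IsAcyclic (Restrict A S)

/-- Acyclic homomorphism of digraphs. -/
def IsAcyclicHom {V W : Type*} (A : V → V → Prop) (B : W → W → Prop) (φ : V → W) : Prop :=
  (∀ w : W, AcyclicOn A (φ ⁻¹' {w})) ∧ ∀ u v, A u v → φ u = φ v ∨ B (φ u) (φ v)

/-- Automorphism of a digraph. -/
def IsDigraphAuto {W : Type*} (B : W → W → Prop) (π : W ≃ W) : Prop :=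
  ∀ u v, B u v ↔ B (π u) (π v)

/-- `D` (with arcs `A`) is uniquely `C`-colourable (`C` with arcs `B`). -/
def UniquelyColourable {V W : Type*} (A : V → V → Prop) (B : W → W → Prop) : Prop :=
  (∃ φ : V → W, IsAcyclicHom A B φ ∧ Function.Surjective φ) ∧
  ∀ φ ψ : V → W, IsAcyclicHom A B φ → IsAcyclicHom A B ψ →
    ∃ π : W ≃ W, IsDigraphAuto B π ∧ φ = ⇑π ∘ ψ

/-- Acyclic-sink set: induces an acyclic subdigraph and emits no arcs. -/
def IsAcyclicSink {V : Type*} (A : V → V → Prop) (S : Set V) : Prop :=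
  AcyclicOn A S ∧ ∀ u ∈ S, ∀ v ∉ S, ¬ A u v

/-- The circular digraph `C(k,d)` on `ℤ_k`: arc `i → j` iff `(j - i) mod k ∈ {d, …, k-1}`. -/
def CircArc (k d : ℕ) : Fin k → Fin k → Prop :=
  fun i j => d ≤ (j.val + k - i.val) % k

/-- There is a directed cycle of length `ℓ`. -/
def HasCycleOfLength {V : Type*} (A : V → V → Prop) (ℓ : ℕ) : Prop :=
  ∃ l : List V, l.length = ℓ ∧ l.Nodup ∧ List.Chain' A l ∧
    ∀ h : l ≠ [], A (l.getLast h) (l.head h)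


/-!
An acyclic-sink set `S` meets every `T` with more than `|V| - |S|` vertices; a sink of the
acyclic digraph induced on `T ∩ S` is then a sink of `T`, because `S` emits no arcs.
Conversely, if `S` is an acyclic-sink set with `|S| < j`, then `Sᶜ` is large enough to contain
a sink `v`, and `insert v S` is again an acyclic-sink set: every arc out of `v` ends in `S`
and no arc enters `v`, so no new cycle appears. Starting from `∅` this builds one of size `j`.
-/

open Relation Set

theorem IsAcyclic.wellFounded_flip {V : Type*} [Finite V] {R : V → V → Prop}
    (hR : IsAcyclic R) : WellFounded (flip R) :=
  have : IsTrans V (flip (TransGen R)) := ⟨fun _ _ _ hab hbc => hbc.trans hab⟩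
  have : Std.Irrefl (flip (TransGen R)) := ⟨hR⟩
  Subrelation.wf (r := flip (TransGen R)) (fun h => TransGen.single h)
    (Finite.wellFounded_of_trans_of_irrefl _)

section AcyclicOn

variable {V : Type*} {A : V → V → Prop} {S : Set V} {v : V}

theorem AcyclicOn.mono {S' : Set V} (hS' : AcyclicOn A S') (hSS' : S ⊆ S') : AcyclicOn A S :=
  fun x hx => hS' x (TransGen.mono (fun _ _ h => ⟨hSS' h.1, hSS' h.2.1, h.2.2⟩) x x hx)

theorem AcyclicOn.exists_sink [Finite V] (hS : AcyclicOn A S) (hne : S.Nonempty) :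
    ∃ v ∈ S, ∀ u ∈ S, ¬ A v u := by
  obtain ⟨v, hvS, hmin⟩ := hS.wellFounded_flip.has_min S hne
  exact ⟨v, hvS, fun u huS hvu => hmin u huS ⟨hvS, huS, hvu⟩⟩

theorem transGen_restrict_of_transGen_restrict_insert (hv : ∀ u ∈ insert v S, ¬ A u v)
    {x y : V} (hxy : TransGen (Restrict A (insert v S)) x y) (hx : x ≠ v) :
    TransGen (Restrict A S) x y := by
  have step : ∀ {a b}, Restrict A (insert v S) a b → a ≠ v → Restrict A S a b :=
    fun {a b} ⟨ha, hb, hab⟩ hav =>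
      ⟨ha.resolve_left hav, hb.resolve_left (by rintro rfl; exact hv a ha hab), hab⟩
  induction hxy using TransGen.head_induction_on with
  | single hab => exact .single (step hab hx)
  | head hac _ ih =>
    exact .head (step hac hx) (ih fun hcv => hv _ hac.1 (hcv ▸ hac.2.2))

theorem AcyclicOn.insert (hS : AcyclicOn A S) (hv : ∀ u ∈ insert v S, ¬ A u v) :
    AcyclicOn A (insert v S) := by
  intro x hx
  have hxv : x ≠ v := by
    rintro rfl
    obtain ⟨u, -, hux⟩ := TransGen.tail'_iff.mp hx
    exact hv u hux.1 hux.2.2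
  exact hS x (transGen_restrict_of_transGen_restrict_insert hv hx hxv)

theorem IsAcyclicSink.insert (hS : IsAcyclicSink A S) (hvS : v ∉ S)
    (hv : ∀ u ∈ Sᶜ, ¬ A v u) : IsAcyclicSink A (insert v S) := by
  refine ⟨hS.1.insert ?_, ?_⟩
  · rintro u (rfl | hu)
    exacts [hv u hvS, hS.2 u hu v hvS]
  · rintro u (rfl | hu) w hw
    exacts [hv w fun hwS => hw (.inr hwS), hS.2 u hu w fun hwS => hw (.inr hwS)]

end AcyclicOn

theorem isAcyclicSink_empty {V : Type*} (A : V → V → Prop) : IsAcyclicSink A ∅ :=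
  ⟨fun _ hx => (by obtain ⟨_, -, ⟨⟨⟩, -⟩⟩ := TransGen.tail'_iff.mp hx), fun _ hu => hu.elim⟩

theorem IsAcyclicSink.exists_sink_of_ncard_lt {V : Type*} [Finite V] {A : V → V → Prop}
    {S T : Set V} (hS : IsAcyclicSink A S) (hT : Nat.card V - S.ncard < T.ncard) :
    ∃ v ∈ T, ∀ u ∈ T, ¬ A v u := by
  have hTS : (T ∩ S).Nonempty := by
    by_contra hempty
    have hTSc : T ⊆ Sᶜ := fun x hxT hxS => hempty ⟨x, hxT, hxS⟩
    have := ncard_le_ncard hTSc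
    rw [ncard_compl] at this
    omega
  obtain ⟨v, ⟨hvT, hvS⟩, hv⟩ := (hS.1.mono inter_subset_right).exists_sink hTS
  refine ⟨v, hvT, fun u huT hvu => ?_⟩
  by_cases huS : u ∈ S
  · exact hv u ⟨huT, huS⟩ hvu
  · exact hS.2 v hvS u huS hvu

theorem exists_isAcyclicSink_ncard_eq {V : Type*} [Finite V] {A : V → V → Prop} {j : ℕ}
    (hj : j ≤ Nat.card V)
    (hsinks : ∀ T : Set V, Nat.card V - j < T.ncard → ∃ v ∈ T, ∀ u ∈ T, ¬ A v u) :
    ∃ S : Set V, IsAcyclicSink A S ∧ S.ncard = j := by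
  induction j with
  | zero => exact ⟨∅, isAcyclicSink_empty A, ncard_empty V⟩
  | succ j ih =>
    obtain ⟨S, hS, rfl⟩ := ih (by omega) fun T hT => hsinks T (by omega)
    obtain ⟨v, hvS, hv⟩ := hsinks Sᶜ (by rw [ncard_compl]; omega)
    exact ⟨insert v S, hS.insert hvS hv, ncard_insert_of_notMem hvS⟩

theorem acyclicSink_iff_large_induced_have_sinks {V : Type*} [Fintype V]
    (A : V → V → Prop) (j : ℕ) (hj : j ≤ Fintype.card V) :
    (∃ S : Set V, IsAcyclicSink A S ∧ S.ncard = j) ↔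
      ∀ T : Set V, Fintype.card V - j < T.ncard → ∃ v ∈ T, ∀ u ∈ T, ¬ A v u := by
  rw [← Nat.card_eq_fintype_card] at hj ⊢
  constructor
  · rintro ⟨S, hS, rfl⟩ T hT
    exact hS.exists_sink_of_ncard_lt hT
  · exact exists_isAcyclicSink_ncard_eq hj
end

section
/- A finite digraph D is a core (i.e., uniquely D-colourable) if and only if every acyclic homomorphism from D to itself is a bijection. -/
/-!
An acyclic endomorphism has acyclic fibres, so an injective one preserves arcs; on a finite
digraph an arc-preserving bijection also reflects arcs (it permutes the finite arc set), hence is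
an automorphism. So if every acyclic endomorphism is bijective, any two of them differ by the
automorphism `φ ∘ ψ⁻¹`, and `id` is a surjective one. Conversely, comparing an acyclic
endomorphism with `id` writes it as an automorphism.
-/

theorem isAcyclicHom_id {V : Type*} {A : V → V → Prop} (hA : Irreflexive A) :
    IsAcyclicHom A A id := by
  have hfibre : ∀ w a b, ¬ Restrict A (id ⁻¹' {w}) a b := by
    rintro w a b ⟨rfl, rfl, hab⟩
    exact hA _ hab
  refine ⟨fun w u hu => ?_, fun _ _ h => Or.inr h⟩
  cases hu with
  | single h => exact hfibre w _ _ h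
  | tail _ h => exact hfibre w _ _ h

theorem IsAcyclicHom.map_rel_of_injective {V W : Type*} {A : V → V → Prop}
    {B : W → W → Prop} {φ : V → W} (hφ : IsAcyclicHom A B φ) (hinj : Function.Injective φ) {u v : V}
    (huv : A u v) : B (φ u) (φ v) := by
  refine (hφ.2 u v huv).resolve_left fun heq => ?_
  cases hinj heq
  exact hφ.1 (φ u) u (.single ⟨rfl, rfl, huv⟩)

theorem isDigraphAuto_ofBijective_of_map_rel {V : Type*} [Finite V] {A : V → V → Prop}
    {φ : V → V} (hφ : Function.Bijective φ) (hmap : ∀ u v, A u v → A (φ u) (φ v)) :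
    IsDigraphAuto A (Equiv.ofBijective φ hφ) := by
  intro u v
  refine ⟨hmap u v, fun h => ?_⟩
  let arcs : Set (V × V) := {p | A p.1 p.2}
  have hinj : Function.Injective (Prod.map φ φ) := hφ.1.prodMap hφ.1
  have hmapsTo : Set.MapsTo (Prod.map φ φ) arcs arcs := fun p hp => hmap _ _ hp
  obtain ⟨p, hp, hpuv⟩ :=
    ((arcs.toFinite.injOn_iff_bijOn_of_mapsTo hmapsTo).1 hinj.injOn).surjOn
      (show (φ u, φ v) ∈ arcs from h)
  obtain rfl : p = (u, v) := hinj hpuv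
  exact hp

theorem IsDigraphAuto.symm {W : Type*} {B : W → W → Prop} {π : W ≃ W}
    (hπ : IsDigraphAuto B π) : IsDigraphAuto B π.symm := fun u v => by
  rw [hπ (π.symm u), π.apply_symm_apply, π.apply_symm_apply]

theorem IsDigraphAuto.trans {W : Type*} {B : W → W → Prop} {π σ : W ≃ W}
    (hπ : IsDigraphAuto B π) (hσ : IsDigraphAuto B σ) : IsDigraphAuto B (π.trans σ) :=
  fun u v => (hπ u v).trans (hσ (π u) (π v))

theorem IsAcyclicHom.isDigraphAuto_ofBijective {V : Type*} [Finite V] {A : V → V → Prop}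
    {φ : V → V} (hφ : IsAcyclicHom A A φ) (hbij : Function.Bijective φ) :
    IsDigraphAuto A (Equiv.ofBijective φ hbij) :=
  isDigraphAuto_ofBijective_of_map_rel hbij fun _ _ => hφ.map_rel_of_injective hbij.1

theorem core_iff_every_endo_bijective {V : Type*} [Fintype V] (A : V → V → Prop)
    (hA : Irreflexive A) :
    UniquelyColourable A A ↔
      ∀ φ : V → V, IsAcyclicHom A A φ → Function.Bijective φ := by
  constructor
  · rintro ⟨-, huniq⟩ φ hφ
    obtain ⟨π, -, rfl⟩ := huniq φ id hφ (isAcyclicHom_id hA)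
    exact π.bijective
  · intro hbij
    refine ⟨⟨id, isAcyclicHom_id hA, Function.surjective_id⟩, fun φ ψ hφ hψ => ?_⟩
    let eφ := Equiv.ofBijective φ (hbij φ hφ)
    let eψ := Equiv.ofBijective ψ (hbij ψ hψ)
    refine ⟨eψ.symm.trans eφ, ?_, ?_⟩
    · exact (hψ.isDigraphAuto_ofBijective _).symm.trans (hφ.isDigraphAuto_ofBijective _)
    · funext v
      exact congrArg φ (eψ.symm_apply_apply v).symm
end

section
/- The composition of acyclic homomorphisms is an acyclic homomorphism: if φ: D → C and ψ: C → B are acyclic homomorphisms of digraphs, then ψ ∘ φ: D → B is an acyclic homomorphism. -/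
/-
A directed cycle inside a fibre of `ψ ∘ φ` either keeps `φ` constant, and is then a cycle inside
a fibre of `φ`, or its image under `φ` contains an arc of `C`, and is then a closed walk inside a
fibre of `ψ`. Either way one of the two acyclicity hypotheses is violated.
-/

open Relation

section

variable {V W : Type*} {A : V → V → Prop} {B : W → W → Prop} {φ : V → W}

theorem transGen_restrict_preimage (hφ : ∀ u v, A u v → φ u = φ v ∨ B (φ u) (φ v))
    {S : Set W} {u v : V} (h : TransGen (Restrict A (φ ⁻¹' S)) u v) :
    TransGen (Restrict B S) (φ u) (φ v) ∨
      (φ u = φ v ∧ TransGen (Restrict A (φ ⁻¹' {φ v})) u v) := by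
  induction h with
  | single harc =>
    obtain ⟨hu, hv, hA⟩ := harc
    rcases hφ _ _ hA with heq | hB
    · exact .inr ⟨heq, .single ⟨heq, rfl, hA⟩⟩
    · exact .inl (.single ⟨hu, hv, hB⟩)
  | @tail w z _ harc ih =>
    obtain ⟨hw, hz, hA⟩ := harc
    rcases hφ _ _ hA with heq | hB
    · rcases ih with hwalk | ⟨heq', hfibre⟩
      · exact .inl (heq ▸ hwalk)
      · exact .inr ⟨heq'.trans heq, (heq ▸ hfibre).tail ⟨heq, rfl, hA⟩⟩
    · have hstep : Restrict B S (φ w) (φ z) := ⟨hw, hz, hB⟩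
      rcases ih with hwalk | ⟨heq', -⟩
      · exact .inl (hwalk.tail hstep)
      · exact .inl (.single (heq' ▸ hstep))

theorem IsAcyclicHom.acyclicOn_preimage (hφ : IsAcyclicHom A B φ) {S : Set W}
    (hS : AcyclicOn B S) : AcyclicOn A (φ ⁻¹' S) := by
  intro v hcycle
  rcases transGen_restrict_preimage hφ.2 hcycle with hwalk | ⟨-, hfibre⟩
  · exact hS (φ v) hwalk
  · exact hφ.1 (φ v) v hfibre

end

theorem acyclicHom_comp {V W X : Type*} (A : V → V → Prop) (B : W → W → Prop)
    (C : X → X → Prop) (φ : V → W) (ψ : W → X)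
    (hφ : IsAcyclicHom A B φ) (hψ : IsAcyclicHom B C ψ) :
    IsAcyclicHom A C (ψ ∘ φ) := by
  refine ⟨fun x => hφ.acyclicOn_preimage (hψ.1 x), fun u v hA => ?_⟩
  rcases hφ.2 u v hA with heq | hB
  · exact .inl (congrArg ψ heq)
  · exact hψ.2 _ _ hB
end

section
/- If k and d are integers with 1 ≤ d ≤ k and gcd(k,d) = r > 1, then the map φ: ℤ_k → ℤ_k given by φ(i) = r·⌊i/r⌋ (with i represented in {0,…,k−1}) is a non-surjective acyclic homomorphism of C(k,d) to itself; consequently C(k,d) is not a core. -/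
/-- The map i ↦ r·⌊i/r⌋ on ℤ_k. -/
def floorMap (k r : ℕ) (i : Fin k) : Fin k :=
  ⟨r * (i.val / r),
    lt_of_le_of_lt (by simpa [Nat.mul_comm] using Nat.div_mul_le_self i.val r) i.isLt⟩

private lemma mod2 {x k : ℕ} (hk : 0 < k) (hx : x < 2 * k) :
    x % k = if x < k then x else x - k := by
  split
  · exact Nat.mod_eq_of_lt ‹_›
  · rw [Nat.mod_eq_sub_mod (by omega)]
    exact Nat.mod_eq_of_lt (by omega)

theorem circ_not_core_of_gcd_gt_one (k d r : ℕ) (hd : 1 ≤ d) (hk : d ≤ k)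
    (hr : r = Nat.gcd k d) (hr1 : 1 < r) :
    IsAcyclicHom (CircArc k d) (CircArc k d) (floorMap k r) ∧
    ¬ Function.Surjective (floorMap k r) ∧
    ¬ ∀ φ : Fin k → Fin k, IsAcyclicHom (CircArc k d) (CircArc k d) φ →
        Function.Bijective φ := by
  have hrd : r ∣ d := hr ▸ Nat.gcd_dvd_right k d
  have hrk : r ∣ k := hr ▸ Nat.gcd_dvd_left k d
  have hrled : r ≤ d := Nat.le_of_dvd (by omega) hrd
  have hk0 : 0 < k := by omega
  have hr0 : 0 < r := by omega
  have hhom : IsAcyclicHom (CircArc k d) (CircArc k d) (floorMap k r) := by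
    constructor
    · -- fibers acyclic
      intro w v hcyc
      have step : ∀ u v : Fin k,
          Restrict (CircArc k d) (floorMap k r ⁻¹' {w}) u v → v.val < u.val := by
        rintro u v ⟨hu, hv, harc⟩
        have huv : floorMap k r u = floorMap k r v := by
          simp only [Set.mem_preimage, Set.mem_singleton_iff] at hu hv
          rw [hu, hv]
        have hval : r * (u.val / r) = r * (v.val / r) := congrArg Fin.val huv
        have hq : u.val / r = v.val / r := Nat.eq_of_mul_eq_mul_left hr0 hval
        by_contra hle
        push_neg at hle
        have hmod1 := Nat.div_add_mod u.val r
        have hmod2 := Nat.div_add_mod v.val r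
        have hs : u.val % r < r := Nat.mod_lt _ hr0
        have ht : v.val % r < r := Nat.mod_lt _ hr0
        have hdiff : v.val - u.val < r := by omega
        have harc' : d ≤ (v.val + k - u.val) % k := harc
        have : v.val + k - u.val = (v.val - u.val) + k := by omega
        rw [this, Nat.add_mod_right, Nat.mod_eq_of_lt (by omega)] at harc'
        omega
      have key : ∀ a b : Fin k,
          Relation.TransGen (Restrict (CircArc k d) (floorMap k r ⁻¹' {w})) a b →
          b.val < a.val := by
        intro a b h
        induction h with
        | single h => exact step _ _ h
        | tail _ h ih => exact lt_trans (step _ _ h) ih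
      exact absurd (key v v hcyc) (lt_irrefl _)
    · -- arc condition
      intro u v harc
      set a := r * (u.val / r) with ha
      set b := r * (v.val / r) with hb
      by_cases hab : a = b
      · left; exact Fin.ext hab
      right
      have hmod1 := Nat.div_add_mod u.val r
      have hmod2 := Nat.div_add_mod v.val r
      have hs : u.val % r < r := Nat.mod_lt _ hr0
      have ht : v.val % r < r := Nat.mod_lt _ hr0
      have hau : a ≤ u.val := by omega
      have hbv : b ≤ v.val := by omega
      have hak : a < k := lt_of_le_of_lt hau u.isLt
      have hbk : b < k := lt_of_le_of_lt hbv v.isLt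
      have hra : r ∣ a := dvd_mul_right r _
      have hrb : r ∣ b := dvd_mul_right r _
      have harc' : d ≤ (v.val + k - u.val) % k := harc
      show d ≤ ((floorMap k r v).val + k - (floorMap k r u).val) % k
      have hfv : (floorMap k r v).val = b := rfl
      have hfu : (floorMap k r u).val = a := rfl
      rw [hfv, hfu]
      set M := (b + k - a) % k with hM
      have hMeq : M = if b + k - a < k then b + k - a else b + k - a - k :=
        mod2 hk0 (by omega)
      have hMdvd : r ∣ M := by
        have h1 : r ∣ b + k - a := by
          have : b + k - a = b + (k - a) := by omega
          rw [this]
          exact Nat.dvd_add hrb (Nat.dvd_sub hrk hra)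
        exact (Nat.dvd_mod_iff hrk).mpr h1
      have hMne : M ≠ 0 := by
        rw [hMeq]; split <;> omega
      have hMger : r ≤ M := Nat.le_of_dvd (by omega) hMdvd
      have hMltk : M < k := by rw [hMeq]; split <;> omega
      have hMle : M ≤ k - r := by
        have : r ≤ k - M := Nat.le_of_dvd (by omega) (Nat.dvd_sub hrk hMdvd)
        omega
      have hM1 : (v.val + k - u.val) % k = M + (v.val % r) - (u.val % r) := by
        rcases lt_or_ge (b + k - a) k with hc | hc
        · have hMv : M = b + k - a := by rw [hMeq, if_pos hc]
          have : v.val + k - u.val = M + (v.val % r) - (u.val % r) := by omega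
          rw [this]
          exact Nat.mod_eq_of_lt (by omega)
        · have hMv : M = b + k - a - k := by rw [hMeq, if_neg (by omega)]
          have : v.val + k - u.val = (M + (v.val % r) - (u.val % r)) + k := by omega
          rw [this, Nat.add_mod_right]
          exact Nat.mod_eq_of_lt (by omega)
      rw [hM1] at harc'
      by_cases hMd : d ≤ M
      · exact hMd
      · have : r ≤ d - M := Nat.le_of_dvd (by omega) (Nat.dvd_sub hrd hMdvd)
        omega
  have hnsurj : ¬ Function.Surjective (floorMap k r) := by
    intro hsurj
    obtain ⟨i, hi⟩ := hsurj ⟨1, by omega⟩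
    have hval : r * (i.val / r) = 1 := congrArg Fin.val hi
    have : r ∣ 1 := ⟨i.val / r, hval.symm⟩
    have := Nat.le_of_dvd one_pos this
    omega
  refine ⟨hhom, hnsurj, fun H => hnsurj (H _ hhom).surjective⟩
end

section
/- For k' ≥ 1, q ≥ 1, 0 < ε < 1, p = n^{ε−1} and w = ⌈n/(2k')⌉, the quantity M = q·C(n,w)²·(1−p)^{w²} satisfies M < e^{−n}/2 for all sufficiently large n. -/
lemma choose_le_two_pow' (n k : ℕ) : n.choose k ≤ 2 ^ n := by
  rcases le_or_gt k n with h | h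
  · calc n.choose k ≤ ∑ i ∈ Finset.range (n + 1), n.choose i :=
        Finset.single_le_sum (fun i _ => Nat.zero_le _)
          (Finset.mem_range.mpr (Nat.lt_succ_of_le h))
    _ = 2 ^ n := Nat.sum_range_choose n
  · rw [Nat.choose_eq_zero_of_lt h]; positivity

theorem bad_pair_expectation_small (k' q : ℕ) (hk' : 1 ≤ k') (hq : 1 ≤ q)
    (ε : ℝ) (hε : 0 < ε) (hε1 : ε < 1) :
    ∃ N : ℕ, ∀ n : ℕ, N ≤ n →
      (q : ℝ) * (n.choose ⌈(n : ℝ) / (2 * k')⌉₊ : ℝ) ^ 2 *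
          (1 - (n : ℝ) ^ (ε - 1)) ^ (⌈(n : ℝ) / (2 * k')⌉₊ ^ 2)
        < Real.exp (-(n : ℝ)) / 2 := by
  set D : ℝ := 4 * (k' : ℝ) ^ 2 * (Real.log 2 + Real.log q + Real.log 4 + 1) + 1 with hD
  -- eventually n^ε ≥ D
  have htends : Filter.Tendsto (fun n : ℕ => (n : ℝ) ^ ε) Filter.atTop Filter.atTop :=
    (tendsto_rpow_atTop hε).comp tendsto_natCast_atTop_atTop
  obtain ⟨N₀, hN₀⟩ := (htends.eventually_ge_atTop D).exists_forall_of_atTop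
  refine ⟨max N₀ 1, fun n hn => ?_⟩
  have hn1 : 1 ≤ n := le_trans (le_max_right _ _) hn
  have hx : (1 : ℝ) ≤ (n : ℝ) := by exact_mod_cast hn1
  have hx0 : (0 : ℝ) < n := by linarith
  have hnD : D ≤ (n : ℝ) ^ ε := hN₀ n (le_trans (le_max_left _ _) hn)
  set x : ℝ := (n : ℝ)
  set w : ℕ := ⌈x / (2 * k')⌉₊ with hwdef
  set p : ℝ := x ^ (ε - 1) with hpdef
  have hp0 : 0 ≤ p := Real.rpow_nonneg (le_of_lt hx0) _
  have hp1 : p ≤ 1 := Real.rpow_le_one_of_one_le_of_nonpos hx (by linarith)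
  have hk0 : (0 : ℝ) < (k' : ℝ) := by exact_mod_cast hk'
  have hw : x / (2 * k') ≤ (w : ℝ) := Nat.le_ceil _
  have hwnn : (0 : ℝ) ≤ (w : ℝ) := Nat.cast_nonneg _
  -- key lower bound on p * w^2
  have hkey : x ^ (1 + ε) / (4 * (k' : ℝ) ^ 2) ≤ p * (w : ℝ) ^ 2 := by
    have h1 : (x / (2 * k')) ^ 2 ≤ (w : ℝ) ^ 2 := by
      apply pow_le_pow_left₀ (by positivity) hw
    have h2 : p * (x / (2 * k')) ^ 2 ≤ p * (w : ℝ) ^ 2 :=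
      mul_le_mul_of_nonneg_left h1 hp0
    refine le_trans (le_of_eq ?_) h2
    have hx2 : x ^ (ε - 1) * x ^ 2 = x ^ (1 + ε) := by
      rw [← Real.rpow_natCast x 2, ← Real.rpow_add hx0]
      ring_nf
    rw [div_pow, hpdef, show ((2:ℝ) * (k':ℝ)) ^ 2 = 4 * (k':ℝ) ^ 2 by ring,
      ← mul_div_assoc, hx2]
  -- bound choose and (1-p)^{w²}
  have hchoose : ((n.choose w : ℕ) : ℝ) ^ 2 ≤ (4 : ℝ) ^ n := by
    have := choose_le_two_pow' n w
    have h2 : ((n.choose w : ℕ) : ℝ) ≤ (2 : ℝ) ^ n := by exact_mod_cast this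
    calc ((n.choose w : ℕ) : ℝ) ^ 2 ≤ ((2 : ℝ) ^ n) ^ 2 :=
          pow_le_pow_left₀ (Nat.cast_nonneg _) h2 2
      _ = (4 : ℝ) ^ n := by rw [← pow_mul, pow_mul']; norm_num
  have hpow : (1 - p) ^ (w ^ 2) ≤ Real.exp (-(p * (w : ℝ) ^ 2)) := by
    have h1 : 1 - p ≤ Real.exp (-p) := by
      have := Real.add_one_le_exp (-p); linarith
    calc (1 - p) ^ (w ^ 2) ≤ (Real.exp (-p)) ^ (w ^ 2) :=
          pow_le_pow_left₀ (by linarith) h1 _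
      _ = Real.exp (-(p * (w : ℝ) ^ 2)) := by
          rw [← Real.exp_nat_mul]
          congr 1
          push_cast
          ring
  -- main chain
  have hq0 : (0 : ℝ) < q := by exact_mod_cast hq
  have hstep : (q : ℝ) * ((n.choose w : ℕ) : ℝ) ^ 2 * (1 - p) ^ (w ^ 2)
      ≤ (q : ℝ) * (4 : ℝ) ^ n * Real.exp (-(p * (w : ℝ) ^ 2)) := by
    apply mul_le_mul
    · exact mul_le_mul_of_nonneg_left hchoose (le_of_lt hq0)
    · exact hpow
    · exact pow_nonneg (by linarith) _
    · positivity
  refine lt_of_le_of_lt hstep ?_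
  -- now the exponential comparison
  rw [div_eq_mul_inv, ← Real.exp_log (show (0:ℝ) < ((2:ℝ))⁻¹ by norm_num),
      ← Real.exp_add]
  have hqe : (q : ℝ) = Real.exp (Real.log q) := (Real.exp_log hq0).symm
  have h4e : (4 : ℝ) ^ n = Real.exp ((n : ℝ) * Real.log 4) := by
    rw [mul_comm, Real.exp_mul, Real.exp_log (by norm_num), Real.rpow_natCast]
  rw [hqe, h4e, ← Real.exp_add, ← Real.exp_add]
  apply Real.exp_lt_exp.mpr
  -- need: log q + n log 4 - p w² < -x + log (2⁻¹)
  have hlog2 : Real.log (2 : ℝ)⁻¹ = - Real.log 2 := Real.log_inv 2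
  rw [hlog2]
  have hfinal : Real.log 2 + Real.log q + x * Real.log 4 + x < x ^ (1 + ε) / (4 * (k' : ℝ) ^ 2) := by
    have hxe : x ^ (1 + ε) = x * x ^ ε := by
      rw [Real.rpow_add hx0, Real.rpow_one]
    have hC : (0 : ℝ) < 4 * (k' : ℝ) ^ 2 := by positivity
    rw [hxe, lt_div_iff₀ hC] at *
    have hlog2pos : (0 : ℝ) < Real.log 2 := Real.log_pos (by norm_num)
    have hlog4pos : (0 : ℝ) < Real.log 4 := Real.log_pos (by norm_num)
    have hlogq : 0 ≤ Real.log q := Real.log_nonneg (by exact_mod_cast hq)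
    have h1 : Real.log 2 + Real.log q + x * Real.log 4 + x
        ≤ x * (Real.log 2 + Real.log q + Real.log 4 + 1) := by
      nlinarith
    have hDn : 4 * (k' : ℝ) ^ 2 * (Real.log 2 + Real.log q + Real.log 4 + 1) + 1 ≤ x ^ ε := hnD
    have h2 : x * (Real.log 2 + Real.log q + Real.log 4 + 1) * (4 * (k' : ℝ) ^ 2)
        < x * x ^ ε := by
      have := mul_lt_mul_of_pos_left (lt_of_lt_of_le (lt_add_one _) hDn) hx0
      calc x * (Real.log 2 + Real.log q + Real.log 4 + 1) * (4 * (k' : ℝ) ^ 2)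
          = x * (4 * (k' : ℝ) ^ 2 * (Real.log 2 + Real.log q + Real.log 4 + 1)) := by ring
        _ < x * x ^ ε := this
    calc (Real.log 2 + Real.log q + x * Real.log 4 + x) * (4 * (k' : ℝ) ^ 2)
        ≤ x * (Real.log 2 + Real.log q + Real.log 4 + 1) * (4 * (k' : ℝ) ^ 2) :=
          mul_le_mul_of_nonneg_right h1 (le_of_lt hC)
      _ < x * x ^ ε := h2
  linarith [hkey]
end
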